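/- Let A₁ and A₂ be regular wiretap sets. Then Cl(A₁) ≺ Cl(A₂) if and only if A₁' ≺ A₂' for every A₁' ∈ Cl(A₁) and every A₂' ∈ Cl(A₂). -/

import Mathlib

open Finset

/-- Consecutive edges in the list match head-to-tail. -/
def EChain {V E : Type*} (tl hd : E → V) (p : List E) : Prop :=
  p.Chain' (fun d e => hd d = tl e)

/-- A (nonempty) directed path of edges starting at node `s`. -/
def PathFrom {V E : Type*} (tl hd : E → V) (s : V) (p : List E) : Prop :=
  p ≠ [] ∧ EChain tl hd p ∧ ∀ e ∈ p.head?, tl e = s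

/-- The directed graph is acyclic: no nonempty edge-chain returns to its start. -/
def Acyclic {V E : Type*} (tl hd : E → V) : Prop :=
  ∀ p : List E, p ≠ [] → EChain tl hd p →
    ∀ d ∈ p.head?, ∀ e ∈ p.getLast?, hd e ≠ tl d

/-- `B` separates the edge set `A` from `s`: every directed path from `s`
ending with an edge of `A` passes through an edge of `B` (i.e. `B` is a cut
between `s` and `A`). -/
def Separates {V E : Type*} (tl hd : E → V) (s : V) (A B : Finset E) : Prop :=
  ∀ p : List E, PathFrom tl hd s p → (∃ e ∈ p.getLast?, e ∈ A) → ∃ b ∈ B, b ∈ p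

/-- The minimum cut capacity between `s` and the edge set `A`. -/
noncomputable def mincut {V E : Type*} [Fintype E] (tl hd : E → V) (s : V)
    (A : Finset E) : ℕ :=
  sInf {n | ∃ B : Finset E, Separates tl hd s A B ∧ B.card = n}

/-- `B` is a minimum cut between `s` and the edge set `A`. -/
def IsMinCut {V E : Type*} [Fintype E] (tl hd : E → V) (s : V) (A B : Finset E) : Prop :=
  Separates tl hd s A B ∧ B.card = mincut tl hd s A

/-- An edge set is regular if its cardinality equals its minimum cut capacity from `s`. -/
def Regular {V E : Type*} [Fintype E] (tl hd : E → V) (s : V) (A : Finset E) : Prop :=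
  A.card = mincut tl hd s A

/-- `A ∼ A'`: the two edge sets have a common minimum cut from `s`. -/
def EquivSets {V E : Type*} [Fintype E] (tl hd : E → V) (s : V) (A A' : Finset E) : Prop :=
  ∃ C : Finset E, IsMinCut tl hd s A C ∧ IsMinCut tl hd s A' C

/-- `A₁ ≺ A₂`: `|A₁| < |A₂|` and some minimum cut between `s` and `A₂`
also separates `A₁` from `s`. -/
def Dominates {V E : Type*} [Fintype E] (tl hd : E → V) (s : V) (A₁ A₂ : Finset E) : Prop :=
  A₁.card < A₂.card ∧
    ∃ C : Finset E, IsMinCut tl hd s A₂ C ∧ Separates tl hd s A₁ C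

/-- A directed path of edges from node `s` to node `t`. -/
def NPathFromTo {V E : Type*} (tl hd : E → V) (s t : V) (p : List E) : Prop :=
  PathFrom tl hd s p ∧ ∀ e ∈ p.getLast?, hd e = t

/-- `B` is a cut between the nodes `s` and `t`. -/
def NSeparates {V E : Type*} (tl hd : E → V) (s t : V) (B : Finset E) : Prop :=
  ∀ p : List E, NPathFromTo tl hd s t p → ∃ b ∈ B, b ∈ p

/-- The minimum cut capacity between the nodes `s` and `t`. -/
noncomputable def nmincut {V E : Type*} [Fintype E] (tl hd : E → V) (s t : V) : ℕ :=
  sInf {n | ∃ B : Finset E, NSeparates tl hd s t B ∧ B.card = n}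

/-- `B` is a minimum cut between the nodes `s` and `t`. -/
def IsNodeMinCut {V E : Type*} [Fintype E] (tl hd : E → V) (s t : V) (B : Finset E) : Prop :=
  NSeparates tl hd s t B ∧ B.card = nmincut tl hd s t

/-- `d ≤ e` for edges: there is a directed path starting with `d` and ending with `e`
(in particular `d ≤ d`). -/
def EdgeLe {V E : Type*} (tl hd : E → V) (d e : E) : Prop :=
  ∃ p : List E, EChain tl hd p ∧ p.head? = some d ∧ p.getLast? = some e

/-- A family of pairwise edge-disjoint paths. -/
def EdgeDisjoint {E : Type*} {n : ℕ} (P : Fin n → List E) : Prop :=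
  ∀ i j, i ≠ j → List.Disjoint (P i) (P j)

/-- The primary minimum cut between nodes `s` and `t`: a minimum cut separating
every minimum cut between `s` and `t` from `s`. -/
def IsPrimaryNodeMinCut {V E : Type*} [Fintype E] (tl hd : E → V) (s t : V)
    (C : Finset E) : Prop :=
  IsNodeMinCut tl hd s t C ∧
    ∀ C' : Finset E, IsNodeMinCut tl hd s t C' → Separates tl hd s C' C

/-- The primary minimum cut between `s` and an edge set `A`. -/
def IsPrimaryMinCut {V E : Type*} [Fintype E] (tl hd : E → V) (s : V)
    (A C : Finset E) : Prop :=
  IsMinCut tl hd s A C ∧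
    ∀ C' : Finset E, IsMinCut tl hd s A C' → Separates tl hd s C' C

/-- The equivalence class (within the collection `𝒜`) of the wiretap set `A`
under the relation `∼`. -/
def ClassOf {V E : Type*} [Fintype E] (tl hd : E → V) (s : V)
    (𝒜 : Finset (Finset E)) (A : Finset E) : Set (Finset E) :=
  {A' | A' ∈ 𝒜 ∧ EquivSets tl hd s A A'}

/-- Domination amongst (distinct) equivalence classes: some common minimum cut of all
the sets in `C₂` separates every set in `C₁` from `s`. -/
def ClDominates {V E : Type*} [Fintype E] (tl hd : E → V) (s : V)
    (C₁ C₂ : Set (Finset E)) : Prop :=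
  C₁ ≠ C₂ ∧ ∃ CUT : Finset E,
    (∀ A ∈ C₂, IsMinCut tl hd s A CUT) ∧ (∀ A ∈ C₁, Separates tl hd s A CUT)

/-!
Minimum cuts between `s` and a fixed edge set `A` are closed under meets. Write a minimum cut
as the boundary of its source side (the nodes reachable from `s` without crossing it); the size
of the boundary is submodular in the side, so the boundary of the intersection of two source
sides is again a minimum cut, and it separates both from `s`. Meeting all minimum cuts of `A`
gives the primary minimum cut of `A`, which is a common minimum cut of the whole class of `A`
and separates every set dominated by `A`: this is the backward direction.

Forward, regularity gives `|A₁'| = mincut A₁' ≤ |CUT| = |A₂'|`, and equality would make `CUT` a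
common minimum cut of both classes, so that the two classes would coincide.
-/

section Paths

variable {V E : Type*} {tl hd : E → V} {s : V}

lemma PathFrom.singleton {e : E} (he : tl e = s) : PathFrom tl hd s [e] :=
  ⟨List.cons_ne_nil e [], List.isChain_singleton e, by simpa using he⟩

lemma PathFrom.snoc {p : List E} {e : E} (hp : PathFrom tl hd s p)
    (hlink : ∀ f ∈ p.getLast?, hd f = tl e) : PathFrom tl hd s (p ++ [e]) := by
  obtain ⟨hne, hch, hhd⟩ := hp
  refine ⟨by simp, List.isChain_append.2 ⟨hch, List.isChain_singleton e, ?_⟩, ?_⟩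
  · simpa using hlink
  · simpa [List.head?_append_of_ne_nil p hne] using hhd

lemma PathFrom.of_append {p q : List E} (hpq : PathFrom tl hd s (p ++ q)) (hp : p ≠ []) :
    PathFrom tl hd s p := by
  obtain ⟨-, hch, hhd⟩ := hpq
  exact ⟨hp, hch.prefix (List.prefix_append p q), by
    simpa [List.head?_append_of_ne_nil p hp] using hhd⟩

lemma Separates.trans {A B C : Finset E} (hAB : Separates tl hd s A B)
    (hBC : Separates tl hd s B C) : Separates tl hd s A C := by
  intro p hp hlast
  obtain ⟨b, hbB, hbp⟩ := hAB p hp hlast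
  obtain ⟨q, r, rfl⟩ := List.append_of_mem hbp
  have hprefix : PathFrom tl hd s (q ++ [b]) := by
    rw [← List.singleton_append, ← List.append_assoc] at hp
    exact hp.of_append (by simp)
  obtain ⟨c, hcC, hcq⟩ := hBC _ hprefix ⟨b, List.getLast?_concat, hbB⟩
  refine ⟨c, hcC, ?_⟩
  simp only [List.mem_append, List.mem_singleton] at hcq
  simp only [List.mem_append, List.mem_cons]
  tauto

variable (tl hd s) in
def sourceSide (C : Finset E) : Set V :=
  {v | v = s ∨ ∃ p e, PathFrom tl hd s p ∧ (∀ f ∈ p, f ∉ C) ∧ p.getLast? = some e ∧ hd e = v}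

lemma mem_sourceSide_self {C : Finset E} : s ∈ sourceSide tl hd s C :=
  Or.inl rfl

lemma exists_pathFrom_of_mem_sourceSide {C : Finset E} {e : E}
    (htl : tl e ∈ sourceSide tl hd s C) (he : e ∉ C) :
    ∃ p, PathFrom tl hd s p ∧ (∀ f ∈ p, f ∉ C) ∧ p.getLast? = some e := by
  rcases htl with hts | ⟨q, f, hq, hqC, hf, hfe⟩
  · exact ⟨[e], PathFrom.singleton hts, by simpa using he, rfl⟩
  · refine ⟨q ++ [e], hq.snoc (by simpa [hf] using hfe), ?_, List.getLast?_concat⟩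
    simpa [or_imp, forall_and, he] using hqC

end Paths

section Cuts

variable {V E : Type*} [Fintype E] {tl hd : E → V} {s : V}

lemma mincut_le_card {A B : Finset E} (h : Separates tl hd s A B) :
    mincut tl hd s A ≤ B.card :=
  Nat.sInf_le ⟨B, h, rfl⟩

lemma exists_isMinCut (A : Finset E) : ∃ B, IsMinCut tl hd s A B := by
  have hsep : Separates tl hd s A Finset.univ := fun p _ ⟨e, he, _⟩ =>
    ⟨e, Finset.mem_univ e, List.mem_of_mem_getLast? he⟩
  obtain ⟨B, hB, hcard⟩ := Nat.sInf_mem (⟨_, Finset.univ, hsep, rfl⟩ :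
    {n | ∃ B : Finset E, Separates tl hd s A B ∧ B.card = n}.Nonempty)
  exact ⟨B, hB, hcard⟩

variable (tl hd) in
noncomputable def cutSet (A : Finset E) (S : Set V) : Finset E :=
  open Classical in {e | tl e ∈ S ∧ (hd e ∉ S ∨ e ∈ A)}

lemma mem_cutSet {A : Finset E} {S : Set V} {e : E} :
    e ∈ cutSet tl hd A S ↔ tl e ∈ S ∧ (hd e ∉ S ∨ e ∈ A) := by
  simp [cutSet]

lemma card_cutSet_inter_add_card_cutSet_union_le (A : Finset E) (S T : Set V) :
    (cutSet tl hd A (S ∩ T)).card + (cutSet tl hd A (S ∪ T)).card ≤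
      (cutSet tl hd A S).card + (cutSet tl hd A T).card := by
  classical
  rw [← Finset.card_union_add_card_inter, ← Finset.card_union_add_card_inter (cutSet tl hd A S)]
  apply add_le_add <;> apply Finset.card_le_card <;> intro e <;>
    simp only [Finset.mem_union, Finset.mem_inter, mem_cutSet, Set.mem_inter_iff,
      Set.mem_union] <;> tauto

lemma EChain.forall_mem_of_disjoint_cutSet {A : Finset E} {S : Set V} :
    ∀ {p : List E}, EChain tl hd p → (∀ e ∈ p.head?, tl e ∈ S) →
      (∀ e ∈ p, e ∉ cutSet tl hd A S) → ∀ e ∈ p, hd e ∈ S ∧ e ∉ A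
  | [], _, _, _ => by simp
  | a :: l, hch, hhd, hout => by
    obtain ⟨hlink, hch⟩ := List.isChain_cons.1 hch
    have ha : hd a ∈ S ∧ a ∉ A := by
      have := hout a List.mem_cons_self
      rw [mem_cutSet] at this
      tauto
    have hl := EChain.forall_mem_of_disjoint_cutSet hch
      (fun f hf => hlink f hf ▸ ha.1) (fun f hf => hout f (List.mem_cons_of_mem a hf))
    simpa [ha] using hl

lemma separates_cutSet {A X : Finset E} {T : Set V} (hs : s ∈ T)
    (hX : ∀ e ∈ X, hd e ∈ T → e ∈ A) : Separates tl hd s X (cutSet tl hd A T) := by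
  rintro p ⟨-, hch, hhd⟩ ⟨e, he, heX⟩
  by_contra! hout
  have hin := hch.forall_mem_of_disjoint_cutSet (fun f hf => hhd f hf ▸ hs)
    (fun f hf hfc => hout f hfc hf) e (List.mem_of_mem_getLast? he)
  exact hin.2 (hX e heX hin.1)

lemma separates_cutSet_self {A : Finset E} {T : Set V} (hs : s ∈ T) :
    Separates tl hd s A (cutSet tl hd A T) :=
  separates_cutSet hs fun _ he _ => he

lemma separates_cutSet_cutSet {A : Finset E} {S T : Set V} (hs : s ∈ T) (hTS : T ⊆ S) :
    Separates tl hd s (cutSet tl hd A S) (cutSet tl hd A T) :=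
  separates_cutSet hs fun _ he hT => by
    have := mem_cutSet.1 he
    tauto

lemma cutSet_sourceSide_subset {A C : Finset E} (h : Separates tl hd s A C) :
    cutSet tl hd A (sourceSide tl hd s C) ⊆ C := by
  intro e he
  obtain ⟨htl, hout | heA⟩ := mem_cutSet.1 he <;> by_contra heC <;>
    obtain ⟨p, hp, hpC, hlast⟩ := exists_pathFrom_of_mem_sourceSide htl heC
  · exact hout (Or.inr ⟨p, e, hp, hpC, hlast, rfl⟩)
  · obtain ⟨b, hbC, hbp⟩ := h p hp ⟨e, hlast, heA⟩
    exact hpC b hbp hbC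

lemma IsMinCut.eq_cutSet_sourceSide {A C : Finset E} (h : IsMinCut tl hd s A C) :
    C = cutSet tl hd A (sourceSide tl hd s C) :=
  (Finset.eq_of_subset_of_card_le (cutSet_sourceSide_subset h.1)
    (h.2 ▸ mincut_le_card (separates_cutSet_self mem_sourceSide_self))).symm

/-- The meet of two minimum cuts: the cut of the intersection of their source sides. -/
lemma IsMinCut.exists_isMinCut_separates {A C C' : Finset E} (hC : IsMinCut tl hd s A C)
    (hC' : IsMinCut tl hd s A C') :
    ∃ D, IsMinCut tl hd s A D ∧ Separates tl hd s C D ∧ Separates tl hd s C' D := by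
  set S := sourceSide tl hd s C
  set S' := sourceSide tl hd s C'
  have hs : s ∈ S ∩ S' := ⟨mem_sourceSide_self, mem_sourceSide_self⟩
  have hinter : mincut tl hd s A ≤ (cutSet tl hd A (S ∩ S')).card :=
    mincut_le_card (separates_cutSet_self hs)
  have hunion : mincut tl hd s A ≤ (cutSet tl hd A (S ∪ S')).card :=
    mincut_le_card (separates_cutSet_self (Or.inl hs.1))
  have hsub := card_cutSet_inter_add_card_cutSet_union_le (tl := tl) (hd := hd) A S S'
  rw [← hC.eq_cutSet_sourceSide, ← hC'.eq_cutSet_sourceSide, hC.2, hC'.2] at hsub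
  refine ⟨cutSet tl hd A (S ∩ S'), ⟨separates_cutSet_self hs, by omega⟩, ?_, ?_⟩
  · rw [hC.eq_cutSet_sourceSide]
    exact separates_cutSet_cutSet hs Set.inter_subset_left
  · rw [hC'.eq_cutSet_sourceSide]
    exact separates_cutSet_cutSet hs Set.inter_subset_right

lemma exists_isMinCut_forall_separates (A : Finset E) (𝒞 : Finset (Finset E))
    (h𝒞 : ∀ C ∈ 𝒞, IsMinCut tl hd s A C) :
    ∃ D, IsMinCut tl hd s A D ∧ ∀ C ∈ 𝒞, Separates tl hd s C D := by
  classical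
  induction 𝒞 using Finset.induction_on with
  | empty => simpa using exists_isMinCut A
  | insert C 𝒞 _ ih =>
    rw [Finset.forall_mem_insert] at h𝒞
    obtain ⟨D, hD, hD𝒞⟩ := ih h𝒞.2
    obtain ⟨D', hD', hCD', hDD'⟩ := h𝒞.1.exists_isMinCut_separates hD
    exact ⟨D', hD', Finset.forall_mem_insert _ _ _ |>.2
      ⟨hCD', fun C' hC' => (hD𝒞 C' hC').trans hDD'⟩⟩

lemma exists_isPrimaryMinCut (A : Finset E) : ∃ P, IsPrimaryMinCut tl hd s A P := by
  classical
  obtain ⟨P, hP, hsep⟩ := exists_isMinCut_forall_separates A {C | IsMinCut tl hd s A C}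
    (fun C hC => (Finset.mem_filter.1 hC).2)
  exact ⟨P, hP, fun C hC => hsep C (by simpa using hC)⟩

end Cuts

section Classes

variable {V E : Type*} [Fintype E] {tl hd : E → V} {s : V} {𝒜 : Finset (Finset E)}
  {A₁ A₂ : Finset E}

lemma mem_classOf_self (hA : A₁ ∈ 𝒜) : A₁ ∈ ClassOf tl hd s 𝒜 A₁ := by
  obtain ⟨C, hC⟩ := exists_isMinCut (tl := tl) (hd := hd) (s := s) A₁
  exact ⟨hA, C, hC, hC⟩

lemma mincut_eq_of_mem_classOf {X : Finset E} (hX : X ∈ ClassOf tl hd s 𝒜 A₁) :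
    mincut tl hd s X = mincut tl hd s A₁ := by
  obtain ⟨-, C, hA, hX⟩ := hX
  rw [← hX.2, hA.2]

lemma classOf_subset_of_forall_isMinCut {C : Finset E}
    (h₁ : ∀ X ∈ ClassOf tl hd s 𝒜 A₁, IsMinCut tl hd s X C) (h₂ : IsMinCut tl hd s A₂ C) :
    ClassOf tl hd s 𝒜 A₁ ⊆ ClassOf tl hd s 𝒜 A₂ :=
  fun X hX => ⟨hX.1, C, h₂, h₁ X hX⟩

lemma classOf_eq_of_forall_isMinCut {C : Finset E} (hA₁ : A₁ ∈ 𝒜) (hA₂ : A₂ ∈ 𝒜)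
    (h₁ : ∀ X ∈ ClassOf tl hd s 𝒜 A₁, IsMinCut tl hd s X C)
    (h₂ : ∀ X ∈ ClassOf tl hd s 𝒜 A₂, IsMinCut tl hd s X C) :
    ClassOf tl hd s 𝒜 A₁ = ClassOf tl hd s 𝒜 A₂ :=
  (classOf_subset_of_forall_isMinCut h₁ (h₂ A₂ (mem_classOf_self hA₂))).antisymm
    (classOf_subset_of_forall_isMinCut h₂ (h₁ A₁ (mem_classOf_self hA₁)))

lemma IsPrimaryMinCut.isMinCut_of_equivSets {P X : Finset E} (hP : IsPrimaryMinCut tl hd s A₁ P)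
    (hX : EquivSets tl hd s A₁ X) : IsMinCut tl hd s X P := by
  obtain ⟨C, hA₁C, hXC⟩ := hX
  exact ⟨hXC.1.trans (hP.2 C hA₁C), by rw [hP.1.2, ← hA₁C.2, hXC.2]⟩

lemma IsPrimaryMinCut.separates_of_dominates {P X : Finset E}
    (hP : IsPrimaryMinCut tl hd s A₂ P) (hX : Dominates tl hd s X A₂) :
    Separates tl hd s X P := by
  obtain ⟨-, C, hA₂C, hXC⟩ := hX
  exact hXC.trans (hP.2 C hA₂C)

lemma ClDominates.dominates (hreg : ∀ A ∈ 𝒜, Regular tl hd s A) (hA₁ : A₁ ∈ 𝒜) (hA₂ : A₂ ∈ 𝒜)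
    (h : ClDominates tl hd s (ClassOf tl hd s 𝒜 A₁) (ClassOf tl hd s 𝒜 A₂))
    {A₁' A₂' : Finset E} (hA₁' : A₁' ∈ ClassOf tl hd s 𝒜 A₁)
    (hA₂' : A₂' ∈ ClassOf tl hd s 𝒜 A₂) : Dominates tl hd s A₁' A₂' := by
  obtain ⟨hne, C, hC₂, hC₁⟩ := h
  refine ⟨?_, C, hC₂ A₂' hA₂', hC₁ A₁' hA₁'⟩
  rw [hreg A₂' hA₂'.1, ← (hC₂ A₂' hA₂').2]
  refine ((hreg A₁' hA₁'.1).trans_le (mincut_le_card (hC₁ A₁' hA₁'))).lt_of_ne fun heq => hne ?_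
  refine classOf_eq_of_forall_isMinCut hA₁ hA₂ (fun X hX => ⟨hC₁ X hX, ?_⟩) hC₂
  rw [mincut_eq_of_mem_classOf hX, ← mincut_eq_of_mem_classOf hA₁', ← hreg A₁' hA₁'.1, heq]

lemma clDominates_of_forall_dominates (hA₂ : A₂ ∈ 𝒜)
    (h : ∀ A₁' ∈ ClassOf tl hd s 𝒜 A₁, ∀ A₂' ∈ ClassOf tl hd s 𝒜 A₂, Dominates tl hd s A₁' A₂') :
    ClDominates tl hd s (ClassOf tl hd s 𝒜 A₁) (ClassOf tl hd s 𝒜 A₂) := by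
  have hA₂A₂ := mem_classOf_self (tl := tl) (hd := hd) (s := s) hA₂
  refine ⟨fun heq => (h A₂ (heq ▸ hA₂A₂) A₂ hA₂A₂).1.false, ?_⟩
  obtain ⟨P, hP⟩ := exists_isPrimaryMinCut (tl := tl) (hd := hd) (s := s) A₂
  exact ⟨P, fun X hX => hP.isMinCut_of_equivSets hX.2,
    fun X hX => hP.separates_of_dominates (h X hX A₂ hA₂A₂)⟩

end Classes

theorem clDominates_iff_forall_dominates_general {V E : Type*} [Fintype E]
    (tl hd : E → V) (s : V)
    (𝒜 : Finset (Finset E)) (hreg : ∀ A ∈ 𝒜, Regular tl hd s A)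
    (A₁ A₂ : Finset E) (hA₁ : A₁ ∈ 𝒜) (hA₂ : A₂ ∈ 𝒜) :
    ClDominates tl hd s (ClassOf tl hd s 𝒜 A₁) (ClassOf tl hd s 𝒜 A₂) ↔
      (∀ A₁' ∈ ClassOf tl hd s 𝒜 A₁, ∀ A₂' ∈ ClassOf tl hd s 𝒜 A₂,
        Dominates tl hd s A₁' A₂') :=
  ⟨fun h _ hA₁' _ hA₂' => h.dominates hreg hA₁ hA₂ hA₁' hA₂',
    clDominates_of_forall_dominates hA₂⟩

/-- `Cl(A₁) ≺ Cl(A₂)` iff `A₁' ≺ A₂'` for all `A₁' ∈ Cl(A₁)` and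
`A₂' ∈ Cl(A₂)`. -/
theorem clDominates_iff_forall_dominates {V E : Type*} [Fintype E]
    (tl hd : E → V) (s : V)
    (hacy : Acyclic tl hd) (hsrc : ∀ e : E, hd e ≠ s)
    (𝒜 : Finset (Finset E)) (hreg : ∀ A ∈ 𝒜, Regular tl hd s A)
    (A₁ A₂ : Finset E) (hA₁ : A₁ ∈ 𝒜) (hA₂ : A₂ ∈ 𝒜) :
    ClDominates tl hd s (ClassOf tl hd s 𝒜 A₁) (ClassOf tl hd s 𝒜 A₂) ↔
      (∀ A₁' ∈ ClassOf tl hd s 𝒜 A₁, ∀ A₂' ∈ ClassOf tl hd s 𝒜 A₂,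
        Dominates tl hd s A₁' A₂') :=
  clDominates_iff_forall_dominates_general tl hd s 𝒜 hreg A₁ A₂ hA₁ hA₂
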